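/- arXiv:0805.3449 — 3 statements merged into one kernel-verified Lean document; each statement's English description precedes it below -/
import Mathlib

section
/- If x = (x_1, …, x_n) ∈ ℕ^n is admissible, then every continuant of a consecutive subsequence is nonnegative: Z_m(x_i, x_{i+1}, …, x_{i+m-1}) ≥ 0 for all 1 ≤ i and m ≥ 0 with i + m − 1 ≤ n. -/
/-- Auxiliary: continuant computed from the *front* of the list; applied to the
reversed list it gives the continuant of the paper. -/
def Zrev {R : Type*} [CommRing R] : List R → R
  | [] => 1
  | [x] => x
  | x :: y :: l => x * Zrev (y :: l) - Zrev l

/-- The continuant polynomial `Z_n(x_1,…,x_n)` (with `Z_{-1}=0`, `Z_0=1`) satisfying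
`Z_n(x_1,…,x_n) = x_n·Z_{n-1}(x_1,…,x_{n-1}) - Z_{n-2}(x_1,…,x_{n-2})`. -/
def Zc {R : Type*} [CommRing R] (l : List R) : R := Zrev l.reverse

/-- The Hirzebruch–Jung continued fraction `[x_1,…,x_n] = x_1 - 1/[x_2,…,x_n]`. -/
noncomputable def hj {K : Type*} [Field K] : List K → K
  | [] => 0
  | [x] => x
  | x :: y :: l => x - 1 / hj (y :: l)

/-- The `n×n` tridiagonal matrix `M(x_1,…,x_n)` with diagonal entries `x_i`,
entries `-1` immediately above and below the diagonal, `0` elsewhere. -/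
def triMat {n : ℕ} {R : Type*} [CommRing R] (x : Fin n → R) :
    Matrix (Fin n) (Fin n) R :=
  Matrix.of fun i j =>
    if i = j then x i
    else if (i : ℕ) + 1 = (j : ℕ) ∨ (j : ℕ) + 1 = (i : ℕ) then -1 else 0

/-- A tuple `x ∈ ℕ^n` is admissible if `M(x)` is positive semidefinite of rank `≥ n-1`. -/
def Admissible {n : ℕ} (x : Fin n → ℕ) : Prop :=
  (triMat fun i => (x i : ℝ)).PosSemidef ∧ n - 1 ≤ (triMat fun i => (x i : ℝ)).rank

/-! Positive semidefiniteness passes to principal submatrices, and the principal submatrix of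
`M(x)` on a block of consecutive indices `i, …, i+m-1` is again `M(x_i, …, x_{i+m-1})`. Its
determinant is therefore nonnegative, and expanding along the first row shows that
`det M(y_1, …, y_m)` obeys the continuant recursion read from the front; since `M` of the
reversed tuple is a permutation conjugate of `M(y)`, the determinant equals `Z_m(y_1, …, y_m)`. -/

section Continuant

variable {R S : Type*} [CommRing R] [CommRing S]

lemma Zrev_map (f : R →+* S) : ∀ l : List R, Zrev (l.map f) = f (Zrev l)
  | [] => by simp [Zrev]
  | [x] => by simp [Zrev]
  | x :: y :: l => by
    rw [List.map_cons, List.map_cons, Zrev, ← List.map_cons, Zrev_map f (y :: l), Zrev_map f l,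
      Zrev, map_sub, map_mul]

lemma Zc_map (f : R →+* S) (l : List R) : Zc (l.map f) = f (Zc l) := by
  rw [Zc, ← List.map_reverse, Zrev_map, Zc]

end Continuant

lemma List.ofFn_comp_rev {α : Type*} {m : ℕ} (x : Fin m → α) :
    List.ofFn (x ∘ Fin.rev) = (List.ofFn x).reverse := by
  simp only [List.ofFn_eq_map, ← List.map_reverse, List.finRange_reverse, List.map_map]

lemma List.ofFn_add_eq_map_range' {α : Type*} (g : ℕ → α) (i m : ℕ) :
    List.ofFn (fun k : Fin m => g (i + k)) = (List.range' i m).map g :=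
  List.ext_getElem (by simp) fun k _ _ => by simp [List.getElem_range']

section TriMat

variable {R : Type*} [CommRing R]

lemma triMat_submatrix_of_val_eq_add {m n a : ℕ} (y : Fin n → R) (e : Fin m → Fin n)
    (he : ∀ k, (e k : ℕ) = a + k) : (triMat y).submatrix e e = triMat (y ∘ e) := by
  ext k l
  have he_inj : e k = e l ↔ k = l := by simp only [Fin.ext_iff, he]; omega
  simp only [Matrix.submatrix_apply, triMat, Matrix.of_apply, he_inj, he, Function.comp_apply]
  congr 2
  apply propext
  omega

lemma triMat_comp_rev {m : ℕ} (x : Fin m → R) :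
    triMat (x ∘ Fin.rev) = (triMat x).submatrix Fin.rev Fin.rev := by
  ext i j
  simp only [Matrix.submatrix_apply, triMat, Matrix.of_apply, Function.comp_apply,
    Fin.rev_inj, Fin.val_rev]
  congr 2
  apply propext
  omega

lemma det_triMat_succ_succ {m : ℕ} (x : Fin (m + 2) → R) :
    (triMat x).det = x 0 * (triMat (Fin.tail x)).det - (triMat (Fin.tail (Fin.tail x))).det := by
  have tail_eq : (triMat x).submatrix Fin.succ Fin.succ = triMat (Fin.tail x) :=
    triMat_submatrix_of_val_eq_add (a := 1) x Fin.succ fun k => by simp [add_comm]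
  have minor_det : ((triMat x).submatrix Fin.succ (Fin.succAbove 1)).det =
      -(triMat (Fin.tail (Fin.tail x))).det := by
    set B := (triMat x).submatrix Fin.succ (Fin.succAbove 1)
    have B_tail : B.submatrix Fin.succ Fin.succ = triMat (Fin.tail (Fin.tail x)) :=
      triMat_submatrix_of_val_eq_add (a := 2) x _ fun k => by simp; omega
    have B00 : B 0 0 = -1 := by simp [B, triMat]
    have B_col : ∀ i : Fin m, B i.succ 0 = 0 := fun i => by
      simp [B, triMat, Fin.ext_iff]
    rw [Matrix.det_succ_column_zero, Fin.sum_univ_succ]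
    simp [B_col, B00, B_tail]
  have x00 : triMat x 0 0 = x 0 := by simp [triMat]
  have x01 : triMat x 0 1 = -1 := by simp [triMat]
  have x0j : ∀ j : Fin m, triMat x 0 j.succ.succ = 0 := fun j => by simp [triMat, Fin.ext_iff]
  rw [Matrix.det_succ_row_zero, Fin.sum_univ_succ, Fin.sum_univ_succ]
  simp [x0j, x00, x01, tail_eq, minor_det, Fin.succ_zero_eq_one]
  ring

lemma det_triMat_eq_Zrev : ∀ {m : ℕ} (x : Fin m → R), (triMat x).det = Zrev (List.ofFn x)
  | 0, x => by simp [Zrev]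
  | 1, x => by simp [triMat, Zrev]
  | m + 2, x => by
    rw [det_triMat_succ_succ, det_triMat_eq_Zrev, det_triMat_eq_Zrev]
    simp only [List.ofFn_succ, Zrev]
    rfl

lemma det_triMat_eq_Zc {m : ℕ} (x : Fin m → R) : (triMat x).det = Zc (List.ofFn x) := by
  rw [Zc, ← List.ofFn_comp_rev, ← det_triMat_eq_Zrev, triMat_comp_rev]
  exact (Matrix.det_submatrix_equiv_self Fin.revPerm _).symm

end TriMat

/-- if `x ∈ ℕ^n` is admissible, then the continuant of every consecutive
subsequence is nonnegative: `Z_m(x_i,…,x_{i+m-1}) ≥ 0` whenever `1 ≤ i` and `i+m-1 ≤ n`. -/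
theorem Zc_nonneg_of_admissible (n : ℕ) (x : ℕ → ℕ)
    (hadm : Admissible fun i : Fin n => x (i.1 + 1)) :
    ∀ i m, 1 ≤ i → i + m ≤ n + 1 →
      0 ≤ Zc ((List.range' i m).map fun j => (x j : ℤ)) := by
  intro i m hi him
  let e : Fin m → Fin n := fun k => ⟨i - 1 + k, by have := k.isLt; omega⟩
  have hpsd : (triMat fun k : Fin m => (x (i + k) : ℝ)).PosSemidef := by
    convert hadm.1.submatrix e using 1
    rw [triMat_submatrix_of_val_eq_add _ e fun _ => rfl]
    congr with k
    simp only [Function.comp_apply, e]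
    congr 2
    omega
  have hdet : ((Zc ((List.range' i m).map fun j => (x j : ℤ)) : ℤ) : ℝ) =
      (triMat fun k : Fin m => (x (i + k) : ℝ)).det := by
    rw [← eq_intCast (Int.castRingHom ℝ), ← Zc_map, List.map_map,
      ← List.ofFn_add_eq_map_range', det_triMat_eq_Zc]
    simp
  exact_mod_cast hdet ▸ hpsd.det_nonneg
end

section
/- Let p > q > 0 be coprime integers with p/(p−q) = [a_1, …, a_r], all a_i ≥ 2. Define weights w_0 := 1 and w_i := Z_{i-1}(a_1, …, a_{i-1}) − Z_{i-2}(a_2, …, a_{i-1}) for 1 ≤ i ≤ r+1. Then 1 = w_0 = w_1 ≤ w_2 ≤ … ≤ w_{r+1} and w_{r+1} = q. -/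
/-!
The weights obey the continuant recurrence `w_{i+1} = a_i w_i - w_{i-1}` with `w_0 = w_1 = 1`,
so as long as `a_i ≥ 2` the increments `w_{i+1} - w_i = (a_i - 2) w_i + (w_i - w_{i-1})` stay
nonnegative. Continuants are symmetric under reversal, so unfolding `[a_1, …, a_r]` from the
front gives `Z_r(a_1, …, a_r) / Z_{r-1}(a_2, …, a_r)`; consecutive continuants are coprime and
positive, so this is the reduced form of `p / (p - q)`, and `w_{r+1} = p - (p - q) = q`.
-/

open List

section Continuant

variable {R : Type*} [CommRing R]

theorem Zrev_cons_cons (x y : R) (l : List R) :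
    Zrev (x :: y :: l) = x * Zrev (y :: l) - Zrev l := rfl

theorem Zrev_append_singleton (x : R) :
    ∀ l : List R, l ≠ [] → Zrev (l ++ [x]) = x * Zrev l - Zrev l.dropLast
  | [y], _ => by simp only [cons_append, nil_append, Zrev, dropLast_singleton]; ring
  | [y, z], _ => by
    simp only [cons_append, nil_append, Zrev, dropLast_cons_cons, dropLast_singleton]
    ring
  | y :: z :: u :: m, _ => by
    have ih₁ := Zrev_append_singleton x (z :: u :: m) (cons_ne_nil _ _)
    have ih₂ := Zrev_append_singleton x (u :: m) (cons_ne_nil _ _)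
    simp only [cons_append, dropLast_cons_cons] at ih₁ ih₂ ⊢
    rw [Zrev_cons_cons y z, ih₁, ih₂, Zrev_cons_cons y z, Zrev_cons_cons y z]
    ring

theorem Zrev_reverse : ∀ l : List R, Zrev l.reverse = Zrev l
  | [] => rfl
  | [_] => rfl
  | x :: y :: m => by
    rw [reverse_cons, Zrev_append_singleton x _ (by simp), dropLast_reverse, tail_cons,
      Zrev_reverse (y :: m), Zrev_reverse m, Zrev]

theorem Zc_eq_Zrev (l : List R) : Zc l = Zrev l := Zrev_reverse l

theorem Zc_range'_map_add_two (a : ℕ → R) (s n : ℕ) :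
    Zc ((range' s (n + 2)).map a) =
      a (s + n + 1) * Zc ((range' s (n + 1)).map a) - Zc ((range' s n).map a) := by
  simp only [Zc, range'_concat, map_append, reverse_append, map_cons, map_nil,
    reverse_singleton, singleton_append, Zrev, one_mul, add_assoc]

theorem isCoprime_Zrev_tail : ∀ l : List R, IsCoprime (Zrev l) (Zrev l.tail)
  | [] => isCoprime_one_left
  | [_] => isCoprime_one_right
  | x :: y :: m => by
    have ih := isCoprime_Zrev_tail (y :: m)
    rw [Zrev, tail_cons, sub_eq_neg_add, mul_comm]
    exact ih.symm.neg_left.add_mul_left_left x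

theorem map_Zrev {S : Type*} [CommRing S] (f : R →+* S) : ∀ l : List R,
    f (Zrev l) = Zrev (l.map f)
  | [] => map_one f
  | [_] => rfl
  | x :: y :: m => by
    rw [map_cons, map_cons, Zrev, Zrev, map_sub, map_mul, map_Zrev f (y :: m), map_Zrev f m,
      map_cons]

def hjWeight (a : ℕ → R) : ℕ → R
  | 0 => 1
  | 1 => 1
  | i + 2 => Zc ((range' 1 (i + 1)).map a) - Zc ((range' 2 i).map a)

theorem hjWeight_add_two (a : ℕ → R) :
    ∀ i, hjWeight a (i + 2) = a (i + 1) * hjWeight a (i + 1) - hjWeight a i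
  | 0 => by simp [hjWeight, Zc, Zrev]
  | 1 => by simp [hjWeight, Zc, Zrev, range'_succ]; ring
  | k + 2 => by
    simp only [hjWeight, Zc_range'_map_add_two, show 1 + (k + 1) + 1 = k + 3 by omega,
      show 2 + k + 1 = k + 3 by omega]
    ring

end Continuant

section Ordered

variable {R : Type*} [CommRing R] [LinearOrder R] [IsStrictOrderedRing R]

theorem Zrev_pos_and_lt_Zrev_cons {l : List R} (hl : ∀ x ∈ l, 2 ≤ x) :
    0 < Zrev l ∧ ∀ x, 2 ≤ x → Zrev l < Zrev (x :: l) := by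
  induction l with
  | nil => exact ⟨one_pos, fun x hx => by change 1 < x; linarith⟩
  | cons y m ih =>
    obtain ⟨hm, hlt⟩ := ih fun x hx => hl x (mem_cons_of_mem y hx)
    have hym := hlt y (hl y mem_cons_self)
    refine ⟨hm.trans hym, fun x hx => ?_⟩
    rw [Zrev_cons_cons]
    nlinarith

theorem Zrev_pos {l : List R} (hl : ∀ x ∈ l, 2 ≤ x) : 0 < Zrev l :=
  (Zrev_pos_and_lt_Zrev_cons hl).1

theorem le_succ_of_two_le_of_recurrence {u c : ℕ → R} {n : ℕ} (h₀ : 0 ≤ u 0)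
    (h₀₁ : u 0 ≤ u 1)
    (hc : ∀ i < n, 2 ≤ c (i + 1)) (hu : ∀ i < n, u (i + 2) = c (i + 1) * u (i + 1) - u i) :
    ∀ i ≤ n, u i ≤ u (i + 1) := by
  suffices ∀ i ≤ n, 0 ≤ u i ∧ u i ≤ u (i + 1) from fun i hi => (this i hi).2
  intro i hi
  induction i with
  | zero => exact ⟨h₀, h₀₁⟩
  | succ i ih =>
    obtain ⟨hpos, hle⟩ := ih (by omega)
    refine ⟨hpos.trans hle, ?_⟩
    rw [hu i (by omega)]
    nlinarith [hc i (by omega)]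

end Ordered

theorem hj_eq_Zrev_div {K : Type*} [Field K] [LinearOrder K] [IsStrictOrderedRing K] :
    ∀ l : List K, (∀ x ∈ l, 2 ≤ x) → l ≠ [] → hj l = Zrev l / Zrev l.tail
  | [x], _, _ => by simp [hj, Zrev]
  | x :: y :: m, hl, _ => by
    have hl' : ∀ z ∈ y :: m, 2 ≤ z := fun z hz => hl z (mem_cons_of_mem x hz)
    have hym := (Zrev_pos hl').ne'
    have hm := (Zrev_pos fun z hz => hl' z (mem_cons_of_mem y hz)).ne'
    rw [hj, hj_eq_Zrev_div (y :: m) hl' (cons_ne_nil y m), tail_cons, tail_cons, Zrev]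
    field_simp

theorem Zrev_eq_of_div_eq_hj {l : List ℤ} (hl : ∀ x ∈ l, 2 ≤ x) (hne : l ≠ []) {p d : ℤ}
    (hd : 0 < d) (hpd : IsCoprime p d) (h : (p : ℚ) / d = hj (l.map (Int.castRingHom ℚ))) :
    p = Zrev l ∧ d = Zrev l.tail := by
  have hl' : ∀ x ∈ l.map (Int.castRingHom ℚ), (2 : ℚ) ≤ x := by
    simpa using fun x hx => (Int.cast_le (R := ℚ)).2 (hl x hx)
  rw [hj_eq_Zrev_div _ hl' (by simpa using hne), ← map_tail, ← map_Zrev, ← map_Zrev] at h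
  exact Rat.div_int_inj hd (Zrev_pos fun x hx => hl x (mem_of_mem_tail hx))
    (Int.isCoprime_iff_gcd_eq_one.1 hpd) (Int.isCoprime_iff_gcd_eq_one.1 (isCoprime_Zrev_tail l))
    h

theorem hjWeight_eq_of_div_eq_hj {p q : ℤ} (hpq : q < p) (hcop : IsCoprime p q) {m : ℕ}
    {a : ℕ → ℤ} (ha : ∀ i, 1 ≤ i → i ≤ m + 1 → 2 ≤ a i)
    (hexp : (p : ℚ) / (p - q) = hj ((range' 1 (m + 1)).map fun i => (a i : ℚ))) :
    hjWeight a (m + 2) = q := by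
  set L := (range' 1 (m + 1)).map a
  have hL : ∀ x ∈ L, 2 ≤ x := by
    simp only [L, mem_map, mem_range'_1]
    rintro _ ⟨i, hi, rfl⟩
    exact ha i hi.1 (by omega)
  have hcop' : IsCoprime p (p - q) := by
    simpa [sub_eq_neg_add] using hcop.neg_right.add_mul_left_right 1
  obtain ⟨hpL, hpqL⟩ := Zrev_eq_of_div_eq_hj hL (by simp [L]) (sub_pos.2 hpq) hcop'
    (by rw [map_map]; exact_mod_cast hexp)
  rw [hjWeight, Zc_eq_Zrev, Zc_eq_Zrev, ← hpL, show (range' 2 m).map a = L.tail from rfl,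
    ← hpqL]
  ring

/-- with `p/(p-q) = [a_1,…,a_r]`, the weights
`w_0 = 1`, `w_i = Z_{i-1}(a_1,…,a_{i-1}) - Z_{i-2}(a_2,…,a_{i-1})` satisfy
`1 = w_0 = w_1 ≤ w_2 ≤ ⋯ ≤ w_{r+1}` and `w_{r+1} = q`. -/
theorem weights_mono (p q : ℤ) (hq : 0 < q) (hpq : q < p) (hcop : IsCoprime p q)
    (r : ℕ) (a : ℕ → ℤ) (ha : ∀ i, 1 ≤ i → i ≤ r → 2 ≤ a i)
    (hexp : (p : ℚ) / ((p : ℚ) - (q : ℚ)) =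
      hj ((List.range' 1 r).map fun i => (a i : ℚ)))
    (w : ℕ → ℤ) (hw0 : w 0 = 1)
    (hwi : ∀ i, 1 ≤ i → i ≤ r + 1 →
      w i = Zc ((List.range' 1 (i - 1)).map a) -
        (if i = 1 then 0 else Zc ((List.range' 2 (i - 2)).map a))) :
    w 1 = 1 ∧ (∀ i, 1 ≤ i → i ≤ r → w i ≤ w (i + 1)) ∧ w (r + 1) = q := by
  have hw : ∀ i ≤ r + 1, w i = hjWeight a i := by
    rintro (_ | _ | i) hi
    · exact hw0
    · simpa [hjWeight, Zc, Zrev] using hwi 1 le_rfl hi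
    · rw [hwi (i + 2) (by omega) hi, if_neg (by omega)]
      rfl
  have hmono := le_succ_of_two_le_of_recurrence (u := hjWeight a) (c := a) (n := r) zero_le_one
    le_rfl (fun i hi => ha (i + 1) (by omega) (by omega)) (fun i _ => hjWeight_add_two a i)
  refine ⟨hw 1 (by omega), fun i _ hi => ?_, ?_⟩
  · rw [hw i (by omega), hw (i + 1) (by omega)]
    exact hmono i hi
  obtain _ | m := r
  · have hp : (0 : ℚ) < p / (p - q) := by
      have : (q : ℚ) < p := by exact_mod_cast hpq
      have : (0 : ℚ) < q := by exact_mod_cast hq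
      apply div_pos <;> linarith
    simp [hexp, hj] at hp
  · rw [hw _ le_rfl]
    exact hjWeight_eq_of_div_eq_hj hpq hcop ha hexp
end

section
/- Let N be an additive commutative group (ℤ-module), let k_1, …, k_r be integers with r ≥ 1, and let u_0, u_1, …, u_r ∈ N satisfy u_0 + u_2 = (k_1 − 1)·u_1 and u_{j-1} + u_{j+1} = k_j·u_j for all 2 ≤ j ≤ r−1. Set u_{r+1} := −(u_0 + u_1). Then for every 1 ≤ j ≤ r one has u_j = Z_{j-1}(k_1, …, k_{j-1})·u_1 + Z_{j-2}(k_2, …, k_{j-1})·u_{r+1}. -/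
/-! The first relation together with `u_{r+1} = -(u_0 + u_1)` reads `u_2 = k_1 u_1 + u_{r+1}`,
so from `j = 2` on, `u` obeys the continuant recurrence `x_{j+1} = k_j x_j - x_{j-1}`, as do the
coefficient sequences `Z_{j-1}(k_1, …)` and `Z_{j-2}(k_2, …)`. Both sides agree at `j = 1, 2`,
hence everywhere. -/

theorem Zc_append_pair {R : Type*} [CommRing R] (l : List R) (y x : R) :
    Zc (l ++ [y, x]) = x * Zc (l ++ [y]) - Zc l := by
  simp [Zc, Zrev]

/-- `continuants k s (n + 1) = Z_n(k_s, …, k_{s+n-1})`, shifted by one so that index `0`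
carries `Z_{-1} = 0`. -/
def continuants {R : Type*} [CommRing R] (k : ℕ → R) (s : ℕ) : ℕ → R
  | 0 => 0
  | n + 1 => Zc ((List.range' s n).map k)

theorem continuants_add_two {R : Type*} [CommRing R] (k : ℕ → R) (s n : ℕ) :
    continuants k s (n + 2) = k (s + n) * continuants k s (n + 1) - continuants k s n := by
  cases n with
  | zero => simp [continuants, Zc, Zrev]
  | succ m =>
    simp only [continuants, List.range'_concat, List.map_append, List.map_cons, List.map_nil,
      List.append_assoc, List.singleton_append, Zc_append_pair, one_mul]

theorem eq_of_eq_of_recurrence {R M : Type*} [Ring R] [AddCommGroup M] [Module R M]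
    (c : ℕ → R) (x y : ℕ → M) (a n : ℕ) (h₀ : x a = y a) (h₁ : x (a + 1) = y (a + 1))
    (hx : ∀ j, a ≤ j → j + 2 ≤ n → x (j + 2) = c (j + 1) • x (j + 1) - x j)
    (hy : ∀ j, a ≤ j → j + 2 ≤ n → y (j + 2) = c (j + 1) • y (j + 1) - y j) :
    ∀ j, a ≤ j → j ≤ n → x j = y j := by
  intro j
  induction j using Nat.strong_induction_on with
  | _ j ih =>
    intro haj hjn
    rcases Nat.lt_or_ge j (a + 2) with hj | hj
    · obtain rfl | rfl : j = a ∨ j = a + 1 := by omega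
      exacts [h₀, h₁]
    · obtain ⟨i, rfl⟩ : ∃ i, j = i + 2 := ⟨j - 2, by omega⟩
      rw [hx i (by omega) hjn, hy i (by omega) hjn, ih (i + 1) (by omega) (by omega) (by omega),
        ih i (by omega) (by omega) (by omega)]

theorem u_eq_Zc_smul_general {N : Type*} [AddCommGroup N] (r : ℕ)
    (k : ℕ → ℤ) (u : ℕ → N)
    (h1 : u 0 + u 2 = (k 1 - 1) • u 1)
    (hmid : ∀ j, 2 ≤ j → j ≤ r - 1 → u (j - 1) + u (j + 1) = k j • u j)
    (hlast : u (r + 1) = -(u 0 + u 1)) :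
    ∀ j, 1 ≤ j → j ≤ r →
      u j = Zc ((List.range' 1 (j - 1)).map k) • u 1 +
        (if j = 1 then (0 : ℤ) else Zc ((List.range' 2 (j - 2)).map k)) • u (r + 1) := by
  have hu₂ : u 2 = k 1 • u 1 + u (r + 1) := by
    rw [eq_sub_of_add_eq' h1, hlast]
    module
  have hu : ∀ j, 1 ≤ j → j ≤ r →
      u j = continuants k 1 j • u 1 + continuants k 2 (j - 1) • u (r + 1) := by
    refine eq_of_eq_of_recurrence k _ _ 1 r (by simp [continuants, Zc, Zrev])
      (by simpa [continuants, Zc, Zrev] using hu₂) (fun j hj hjr => ?_) (fun j hj _ => ?_)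
    · have hrec := hmid (j + 1) (by omega) (by omega)
      rw [Nat.add_sub_cancel] at hrec
      exact eq_sub_of_add_eq' hrec
    · obtain ⟨i, rfl⟩ : ∃ i, j = i + 1 := ⟨j - 1, by omega⟩
      simp only [show i + 1 + 2 - 1 = i + 2 by omega, Nat.add_sub_cancel,
        continuants_add_two k 1 (i + 1), continuants_add_two k 2 i,
        show 1 + (i + 1) = i + 1 + 1 by omega, show 2 + i = i + 1 + 1 by omega]
      module
  intro j hj hjr
  obtain ⟨i, rfl⟩ : ∃ i, j = i + 1 := ⟨j - 1, by omega⟩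
  rw [hu (i + 1) hj hjr]
  cases i <;> rfl

/-- if `u_0 + u_2 = (k_1-1)u_1`, `u_{j-1} + u_{j+1} = k_j u_j` for
`2 ≤ j ≤ r-1` and `u_{r+1} = -(u_0 + u_1)`, then
`u_j = Z_{j-1}(k_1,…,k_{j-1})·u_1 + Z_{j-2}(k_2,…,k_{j-1})·u_{r+1}` for `1 ≤ j ≤ r`. -/
theorem u_eq_Zc_smul {N : Type*} [AddCommGroup N] (r : ℕ) (hr : 1 ≤ r)
    (k : ℕ → ℤ) (u : ℕ → N)
    (h1 : u 0 + u 2 = (k 1 - 1) • u 1)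
    (hmid : ∀ j, 2 ≤ j → j ≤ r - 1 → u (j - 1) + u (j + 1) = k j • u j)
    (hlast : u (r + 1) = -(u 0 + u 1)) :
    ∀ j, 1 ≤ j → j ≤ r →
      u j = Zc ((List.range' 1 (j - 1)).map k) • u 1 +
        (if j = 1 then (0 : ℤ) else Zc ((List.range' 2 (j - 2)).map k)) • u (r + 1) :=
  u_eq_Zc_smul_general r k u h1 hmid hlast
end
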